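/- arXiv:1605.03316 — 2 statements merged into one kernel-verified Lean document; each statement's English description precedes it below -/
import Mathlib

section
/- For real numbers $0 \le \alpha \le \beta \le 1$, $0 \le \zeta \le 1$, and $0 \le \xi \le 1/2$ such that $\xi + \zeta\beta \le 1$, the function $\Gamma_1(\alpha) = \sqrt{(\xi+\zeta\alpha)(\xi+\zeta\beta)} + \sqrt{(1-\xi-\zeta\alpha)(1-\xi-\zeta\beta)}$ satisfies $\Gamma_1(\alpha) \ge \Gamma_1(0) = \sqrt{\xi(\xi+\zeta\beta)} + \sqrt{(1-\xi)(1-\xi-\zeta\beta)}$. -/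
theorem stmt0 (α β ζ ξ : ℝ) (hα : 0 ≤ α) (hαβ : α ≤ β) (hβ : β ≤ 1)
    (hζ0 : 0 ≤ ζ) (hζ1 : ζ ≤ 1) (hξ0 : 0 ≤ ξ) (hξ : ξ ≤ 1/2)
    (hsum : ξ + ζ * β ≤ 1) :
    Real.sqrt ((ξ + ζ * α) * (ξ + ζ * β)) +
        Real.sqrt ((1 - ξ - ζ * α) * (1 - ξ - ζ * β)) ≥
      Real.sqrt (ξ * (ξ + ζ * β)) + Real.sqrt ((1 - ξ) * (1 - ξ - ζ * β)) := by
  set a := ξ + ζ * α with ha_def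
  set b := ξ + ζ * β with hb_def
  have hζα : 0 ≤ ζ * α := mul_nonneg hζ0 hα
  have hab : a ≤ b := by nlinarith
  have hξa : ξ ≤ a := by linarith
  have hb1 : b ≤ 1 := by linarith
  have ha0 : 0 ≤ a := by linarith
  have hb0 : 0 ≤ b := le_trans ha0 hab
  have h1a : 0 ≤ 1 - a := by linarith
  have h1b : 0 ≤ 1 - b := by linarith
  have h1ξ : 0 ≤ 1 - ξ := by linarith
  have e1 : (1 : ℝ) - ξ - ζ * α = 1 - a := by ring
  have e2 : (1 : ℝ) - ξ - ζ * β = 1 - b := by ring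
  rw [e1, e2, Real.sqrt_mul ha0, Real.sqrt_mul h1a, Real.sqrt_mul hξ0,
    Real.sqrt_mul h1ξ]
  set s := Real.sqrt ξ
  set t := Real.sqrt a
  set u := Real.sqrt (1 - a)
  set v := Real.sqrt (1 - ξ)
  set p := Real.sqrt b
  set q := Real.sqrt (1 - b)
  have hs2 : s ^ 2 = ξ := Real.sq_sqrt hξ0
  have ht2 : t ^ 2 = a := Real.sq_sqrt ha0
  have hu2 : u ^ 2 = 1 - a := Real.sq_sqrt h1a
  have hv2 : v ^ 2 = 1 - ξ := Real.sq_sqrt h1ξ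
  have hp2 : p ^ 2 = b := Real.sq_sqrt hb0
  have hq2 : q ^ 2 = 1 - b := Real.sq_sqrt h1b
  have hs0 : 0 ≤ s := Real.sqrt_nonneg _
  have ht0 : 0 ≤ t := Real.sqrt_nonneg _
  have hu0 : 0 ≤ u := Real.sqrt_nonneg _
  have hv0 : 0 ≤ v := Real.sqrt_nonneg _
  have hp0 : 0 ≤ p := Real.sqrt_nonneg _
  have hq0 : 0 ≤ q := Real.sqrt_nonneg _
  have hts : s ≤ t := Real.sqrt_le_sqrt hξa
  have huv : u ≤ v := Real.sqrt_le_sqrt (by linarith)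
  -- p * u ≥ q * t : since b*(1-a) ≥ a*(1-b)
  have h1 : q * t ≤ p * u := by
    have : Real.sqrt (a * (1 - b)) ≤ Real.sqrt (b * (1 - a)) :=
      Real.sqrt_le_sqrt (by nlinarith)
    rwa [Real.sqrt_mul ha0, Real.sqrt_mul hb0, mul_comm] at this
  have h2 : q * s ≤ p * v := by
    have : Real.sqrt (ξ * (1 - b)) ≤ Real.sqrt (b * (1 - ξ)) :=
      Real.sqrt_le_sqrt (by nlinarith)
    rwa [Real.sqrt_mul hξ0, Real.sqrt_mul hb0, mul_comm] at this
  have hvpos : 0 < v := Real.sqrt_pos.2 (by linarith)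
  have key : 0 ≤ (t - s) * ((p * u - q * t) + (p * v - q * s)) :=
    mul_nonneg (by linarith) (by linarith)
  have hid : u ^ 2 - v ^ 2 = s ^ 2 - t ^ 2 := by rw [hs2, ht2, hu2, hv2]; ring
  have goal' : 0 ≤ (t * p + u * q - (s * p + v * q)) * (u + v) := by
    have hr : (t * p + u * q - (s * p + v * q)) * (u + v) =
        (t - s) * ((p * u - q * t) + (p * v - q * s)) +
          q * ((u ^ 2 - v ^ 2) - (s ^ 2 - t ^ 2)) := by ring
    rw [hr, hid]
    simpa using key
  have huv0 : 0 < u + v := by linarith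
  have hfin : 0 ≤ t * p + u * q - (s * p + v * q) :=
    le_of_mul_le_mul_right (by rw [zero_mul]; exact goal') huv0
  linarith
end

section
/- Fix $0 < p_e < 1$, $0 < \pi_1 < 1$, and an integer $K \ge 1$ with $p_e \ne \pi_1$. Define $\lambda(q_1) = \frac{p_e(1-q_1\pi_1)}{(1-p_e)q_1\pi_1}$ and $\Lambda(q_1) = \frac{p_e}{\pi_1} \cdot \frac{1 - \lambda(q_1)^K}{1 - p_e\lambda(q_1)^K - (1-p_e)\lambda(q_1)^{K+1}}$ for $q_1 \in (0,1]$ with $\lambda(q_1) \ne 1$. Then $\Lambda$ is nondecreasing in $q_1$, and hence $\Lambda(q_1) \le \Lambda(1) = \frac{p_e}{\pi_1} \cdot \frac{1 - \lambda(1)^K}{1 - p_e\lambda(1)^K - (1-p_e)\lambda(1)^{K+1}}$ where $\lambda(1) = \frac{p_e(1-\pi_1)}{(1-p_e)\pi_1}$. -/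
theorem stmt19 (pe π1 : ℝ) (K : ℕ) (hK : 1 ≤ K)
    (hpe0 : 0 < pe) (hpe1 : pe < 1) (hπ0 : 0 < π1) (hπ1 : π1 < 1)
    (hne : pe ≠ π1)
    (lam Lam : ℝ → ℝ)
    (hlam : lam = fun q1 => pe * (1 - q1 * π1) / ((1 - pe) * (q1 * π1)))
    (hLam : Lam = fun q1 => pe / π1 *
      ((1 - lam q1 ^ K) / (1 - pe * lam q1 ^ K - (1 - pe) * lam q1 ^ (K + 1))))
    (D : Set ℝ) (hD : D = {q1 ∈ Set.Ioc 0 1 | lam q1 ≠ 1}) :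
    MonotoneOn Lam D ∧
    (∀ q1 ∈ D, Lam q1 ≤ Lam 1) ∧
    Lam 1 = pe / π1 *
      ((1 - (pe * (1 - π1) / ((1 - pe) * π1)) ^ K) /
        (1 - pe * (pe * (1 - π1) / ((1 - pe) * π1)) ^ K -
          (1 - pe) * (pe * (1 - π1) / ((1 - pe) * π1)) ^ (K + 1))) := by
  have hpe1' : (0:ℝ) < 1 - pe := by linarith
  set s : ℝ → ℝ := fun x => ∑ i ∈ Finset.range K, x ^ i with hs
  have hspos : ∀ x : ℝ, 0 < x → 0 < s x := fun x hx =>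
    Finset.sum_pos (fun i _ => pow_pos hx i) ⟨0, Finset.mem_range.mpr (by omega)⟩
  have hden : ∀ x : ℝ, 0 < x → 0 < s x + (1 - pe) * x ^ K := fun x hx =>
    add_pos (hspos x hx) (mul_pos hpe1' (pow_pos hx K))
  have hgs : ∀ x : ℝ, (1 - x) * s x = 1 - x ^ K := by
    intro x
    simp only [hs]
    linear_combination (-1 : ℝ) * geom_sum_mul x K
  have hfac : ∀ x : ℝ, 1 - pe * x ^ K - (1 - pe) * x ^ (K + 1)
      = (1 - x) * (s x + (1 - pe) * x ^ K) := by
    intro x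
    linear_combination (-1 : ℝ) * hgs x
  have hratio : ∀ x : ℝ, 0 < x → x ≠ 1 →
      (1 - x ^ K) / (1 - pe * x ^ K - (1 - pe) * x ^ (K + 1))
        = s x / (s x + (1 - pe) * x ^ K) := by
    intro x hx hx1
    have h1x : (1 - x) ≠ 0 := sub_ne_zero_of_ne (Ne.symm hx1)
    rw [hfac x, ← hgs x, mul_div_mul_left _ _ h1x]
  have hLg : ∀ q : ℝ, 0 < lam q → lam q ≠ 1 →
      Lam q = pe / π1 * (s (lam q) / (s (lam q) + (1 - pe) * lam q ^ K)) := by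
    intro q h0 h1
    rw [hLam]
    simp only
    rw [hratio (lam q) h0 h1]
  have hlampos : ∀ q : ℝ, q ∈ Set.Ioc (0:ℝ) 1 → 0 < lam q := by
    intro q hq
    rw [hlam]
    simp only
    have h1 : 0 < q * π1 := mul_pos hq.1 hπ0
    have h2 : q * π1 < 1 := by nlinarith [hq.1, hq.2]
    exact div_pos (mul_pos hpe0 (by linarith)) (mul_pos hpe1' h1)
  have hlamanti : ∀ a b : ℝ, a ∈ Set.Ioc (0:ℝ) 1 → b ∈ Set.Ioc (0:ℝ) 1 → a ≤ b →
      lam b ≤ lam a := by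
    intro a b ha hb hab
    rw [hlam]
    simp only
    rw [div_le_div_iff₀ (mul_pos hpe1' (mul_pos hb.1 hπ0)) (mul_pos hpe1' (mul_pos ha.1 hπ0))]
    nlinarith [mul_nonneg (mul_nonneg (mul_nonneg hpe0.le hpe1'.le) hπ0.le)
      (sub_nonneg.mpr hab), mul_pos ha.1 hπ0, mul_pos hb.1 hπ0]
  have hganti : ∀ x y : ℝ, 0 < x → x ≤ y →
      pe / π1 * (s y / (s y + (1 - pe) * y ^ K)) ≤
        pe / π1 * (s x / (s x + (1 - pe) * x ^ K)) := by
    intro x y hx hxy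
    have hy : 0 < y := lt_of_lt_of_le hx hxy
    have key : s y * x ^ K ≤ s x * y ^ K := by
      simp only [hs, Finset.sum_mul]
      apply Finset.sum_le_sum
      intro i hi
      have hiK : i ≤ K := (Finset.mem_range.mp hi).le
      have e1 : x ^ K = x ^ i * x ^ (K - i) := by rw [← pow_add]; congr 1; omega
      have e2 : y ^ K = y ^ i * y ^ (K - i) := by rw [← pow_add]; congr 1; omega
      have h3 : x ^ (K - i) ≤ y ^ (K - i) := pow_le_pow_left₀ hx.le hxy _
      calc y ^ i * x ^ K = x ^ i * y ^ i * x ^ (K - i) := by rw [e1]; ring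
        _ ≤ x ^ i * y ^ i * y ^ (K - i) := by
            apply mul_le_mul_of_nonneg_left h3 (by positivity)
        _ = x ^ i * y ^ K := by rw [e2]; ring
    apply mul_le_mul_of_nonneg_left _ (by positivity)
    rw [div_le_div_iff₀ (hden y hy) (hden x hx)]
    nlinarith [mul_le_mul_of_nonneg_left key hpe1'.le]
  have h1mem : (1:ℝ) ∈ Set.Ioc (0:ℝ) 1 := ⟨one_pos, le_refl 1⟩
  have hlam1ne : lam 1 ≠ 1 := by
    rw [hlam]
    simp only [one_mul]
    intro h
    have hπne : π1 ≠ 0 := ne_of_gt hπ0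
    have hpene : (1 - pe) ≠ 0 := ne_of_gt hpe1'
    field_simp at h
    exact hne (by linarith)
  refine ⟨?_, ?_, ?_⟩
  · intro a ha b hb hab
    rw [hD] at ha hb
    obtain ⟨ha1, ha2⟩ := ha
    obtain ⟨hb1, hb2⟩ := hb
    rw [hLg a (hlampos a ha1) ha2, hLg b (hlampos b hb1) hb2]
    exact hganti (lam b) (lam a) (hlampos b hb1) (hlamanti a b ha1 hb1 hab)
  · intro q hq
    rw [hD] at hq
    obtain ⟨hq1, hq2⟩ := hq
    rw [hLg q (hlampos q hq1) hq2, hLg 1 (hlampos 1 h1mem) hlam1ne]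
    exact hganti (lam 1) (lam q) (hlampos 1 h1mem) (hlamanti q 1 hq1 h1mem hq1.2)
  · rw [hLam, hlam]
    norm_num
end
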